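/- For real symmetric n×n matrices A and B with eigenvalues λ_1(A) ≥ ... ≥ λ_n(A) and λ_1(B) ≥ ... ≥ λ_n(B), one has Σ_{i=1}^n λ_i(A) λ_{n+1−i}(B) ≤ trace(AB) ≤ Σ_{i=1}^n λ_i(A) λ_i(B). -/
import Mathlib

open Matrix

theorem stmt9 {n : ℕ} (A B : Matrix (Fin n) (Fin n) ℝ)
    (hA : A.IsHermitian) (hB : B.IsHermitian)
    (μ ν : Fin n → ℝ) (hμmono : Antitone μ) (hνmono : Antitone ν)
    (hμ : ∃ σ : Equiv.Perm (Fin n), μ = hA.eigenvalues ∘ σ)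
    (hν : ∃ σ : Equiv.Perm (Fin n), ν = hB.eigenvalues ∘ σ) :
    (∑ i : Fin n, μ i * ν i.rev) ≤ (A * B).trace ∧
      (A * B).trace ≤ ∑ i : Fin n, μ i * ν i := by
  obtain ⟨σA, hμe⟩ := hμ
  obtain ⟨σB, hνe⟩ := hν
  set α := hA.eigenvalues with hα
  set β := hB.eigenvalues with hβ
  set U : Matrix (Fin n) (Fin n) ℝ := (hA.eigenvectorUnitary : Matrix (Fin n) (Fin n) ℝ) with hU
  set V : Matrix (Fin n) (Fin n) ℝ := (hB.eigenvectorUnitary : Matrix (Fin n) (Fin n) ℝ) with hV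
  set W : Matrix (Fin n) (Fin n) ℝ := star U * V with hW
  have hUmem : U ∈ Matrix.unitaryGroup (Fin n) ℝ := (hA.eigenvectorUnitary).2
  have hVmem : V ∈ Matrix.unitaryGroup (Fin n) ℝ := (hB.eigenvectorUnitary).2
  have hUU : U * star U = 1 := mem_unitaryGroup_iff.mp hUmem
  have hUU' : star U * U = 1 := mem_unitaryGroup_iff'.mp hUmem
  have hVV : V * star V = 1 := mem_unitaryGroup_iff.mp hVmem
  have hVV' : star V * V = 1 := mem_unitaryGroup_iff'.mp hVmem
  have hWW : W * star W = 1 := by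
    rw [hW, Matrix.star_mul, star_star, mul_assoc, ← mul_assoc V, hVV, one_mul, hUU']
  have hWW' : star W * W = 1 := by
    rw [hW, Matrix.star_mul, star_star, mul_assoc, ← mul_assoc U, hUU, one_mul, hVV']
  -- the doubly stochastic matrix
  set D : Matrix (Fin n) (Fin n) ℝ := Matrix.of (fun i j => (W i j) ^ 2) with hD
  have hDrow : ∀ i, ∑ j, D i j = 1 := by
    intro i
    have : (W * star W) i i = 1 := by rw [hWW]; simp
    rw [mul_apply] at this
    simpa [hD, Matrix.star_apply, sq] using this
  have hDcol : ∀ j, ∑ i, D i j = 1 := by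
    intro j
    have : (star W * W) j j = 1 := by rw [hWW']; simp
    rw [mul_apply] at this
    simpa [hD, Matrix.star_apply, sq, mul_comm] using this
  have hDmem : D ∈ doublyStochastic ℝ (Fin n) := by
    rw [mem_doublyStochastic_iff_sum]
    exact ⟨fun i j => sq_nonneg _, hDrow, hDcol⟩
  -- trace computation
  have hAe : A = U * Matrix.diagonal α * star U := by
    have := hA.spectral_theorem
    simpa [RCLike.ofReal_real_eq_id] using this
  have hBe : B = V * Matrix.diagonal β * star V := by
    have := hB.spectral_theorem
    simpa [RCLike.ofReal_real_eq_id] using this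
  have key : (A * B).trace = ∑ k, ∑ j, α k * β j * D k j := by
    have h1 : A * B = (U * Matrix.diagonal α) * (star U * V * Matrix.diagonal β) * star V := by
      rw [hAe, hBe]; simp only [mul_assoc]
    have h2 : (A * B).trace
        = (star V * (U * Matrix.diagonal α) * (star U * V * Matrix.diagonal β)).trace := by
      rw [h1, Matrix.trace_mul_cycle]
    have h3 : star V * (U * Matrix.diagonal α) * (star U * V * Matrix.diagonal β)
        = star W * Matrix.diagonal α * (W * Matrix.diagonal β) := by
      rw [hW, Matrix.star_mul, star_star]; simp only [mul_assoc]
    rw [h2, h3, Matrix.trace]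
    simp only [Matrix.diag_apply, Matrix.mul_apply, Matrix.mul_diagonal, Matrix.diagonal_apply]
    rw [Finset.sum_comm]
    refine Finset.sum_congr rfl fun k _ => ?_
    refine Finset.sum_congr rfl fun j _ => ?_
    simp [hD, Matrix.star_apply, sq]
    ring
  -- linear functional
  set g : Matrix (Fin n) (Fin n) ℝ → ℝ := fun M => ∑ k, ∑ j, α k * β j * M k j with hg
  have hglin : IsLinearMap ℝ g := by
    constructor
    · intro x y
      simp [hg, Matrix.add_apply, mul_add, Finset.sum_add_distrib]
    · intro c x
      simp only [hg, Matrix.smul_apply, smul_eq_mul, Finset.mul_sum]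
      refine Finset.sum_congr rfl fun k _ => Finset.sum_congr rfl fun j _ => by ring
  -- bounds for each permutation
  have hperm : ∀ ρ : Equiv.Perm (Fin n),
      (∑ i : Fin n, μ i * ν i.rev) ≤ ∑ k, μ k * ν (ρ k) ∧
        (∑ k, μ k * ν (ρ k)) ≤ ∑ i : Fin n, μ i * ν i := by
    intro ρ
    constructor
    · have hmono : Monotone (fun i : Fin n => ν i.rev) := by
        intro i j hij
        exact hνmono (Fin.rev_le_rev.mpr hij)
      have hanti : Antivary μ (fun i : Fin n => ν i.rev) := hμmono.antivary hmono
      have := hanti.sum_mul_le_sum_mul_comp_perm (σ := ρ.trans Fin.revPerm)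
      simpa using this
    · exact (hμmono.monovary hνmono).sum_mul_comp_perm_le_sum_mul (σ := ρ)
  have hpermval : ∀ σ : Equiv.Perm (Fin n),
      g (σ.permMatrix ℝ) = ∑ k, μ k * ν ((σA.trans (σ.trans σB.symm)) k) := by
    intro σ
    have h1 : g (σ.permMatrix ℝ) = ∑ k, α k * β (σ k) := by
      simp [hg, Equiv.Perm.permMatrix, PEquiv.toMatrix_apply, Equiv.toPEquiv_apply,
        mul_ite, mul_one, mul_zero, Finset.sum_ite_eq]
    rw [h1]
    rw [← Equiv.sum_comp σA (fun k => α k * β (σ k))]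
    refine Finset.sum_congr rfl fun m _ => ?_
    have hμm : μ m = α (σA m) := by rw [hμe]; rfl
    have hνm : ν ((σA.trans (σ.trans σB.symm)) m) = β (σ (σA m)) := by
      rw [hνe]
      simp
    rw [hμm, hνm]
  -- convexity argument
  set c : ℝ := ∑ i : Fin n, μ i * ν i with hc
  set l : ℝ := ∑ i : Fin n, μ i * ν i.rev with hl
  have hDg : D ∈ {M : Matrix (Fin n) (Fin n) ℝ | l ≤ g M} ∩ {M | g M ≤ c} := by
    have hsub : {M : Matrix (Fin n) (Fin n) ℝ | ∃ σ : Equiv.Perm (Fin n), σ.permMatrix ℝ = M}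
        ⊆ {M : Matrix (Fin n) (Fin n) ℝ | l ≤ g M} ∩ {M | g M ≤ c} := by
      rintro M ⟨σ, rfl⟩
      have h := hperm (σA.trans (σ.trans σB.symm))
      constructor
      · show l ≤ g (σ.permMatrix ℝ)
        rw [hpermval σ]
        exact h.1
      · show g (σ.permMatrix ℝ) ≤ c
        rw [hpermval σ]
        exact h.2
    have hconv : Convex ℝ ({M : Matrix (Fin n) (Fin n) ℝ | l ≤ g M} ∩ {M | g M ≤ c}) :=
      (convex_halfSpace_ge hglin l).inter (convex_halfSpace_le hglin c)
    have := convexHull_min hsub hconv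
    apply this
    rw [← doublyStochastic_eq_convexHull_permMatrix]
    exact hDmem
  have htr : (A * B).trace = g D := key
  exact ⟨htr ▸ hDg.1, htr ▸ hDg.2⟩
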